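/- arXiv:2102.04579 — 3 statements merged into one kernel-verified Lean document; each statement's English description precedes it below -/
import Mathlib

section
/- Permanent composition formula: Let a, b, c, w be natural numbers, let M be an a×c complex matrix and N a c×b complex matrix, and let u ∈ Φ_{a,w} and v ∈ Φ_{b,w}. Then Per[(MN)_{u,v}] = Σ_{s ∈ Φ_{c,w}} (1/s!) · Per(M_{u,s}) · Per(N_{s,v}). -/
/-- The permanent of a (generalized square) matrix whose rows and columns are indexed by
finite types of the same cardinality: `Per A = ∑_{σ} ∏_i a_{i, σ(i)}`, the sum ranging over
all bijections from rows to columns. For `α = β = Fin r` this is the usual permanent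
`∑_{σ ∈ S_r} ∏_i a_{i σ(i)}`. -/
noncomputable def Per {α β : Type*} [Fintype α] [Fintype β] [DecidableEq α] [DecidableEq β]
    (A : Matrix α β ℂ) : ℂ :=
  ∑ f : α ≃ β, ∏ i : α, A i (f i)

/-- The matrix `M_{u,v}` obtained from an `a × b` matrix `M` by repeating its `i`-th row
`u i` times and its `j`-th column `v j` times (rows/columns of multiplicity zero are
deleted). -/
def rep {a b : ℕ} (M : Matrix (Fin a) (Fin b) ℂ) (u : Fin a → ℕ) (v : Fin b → ℕ) :
    Matrix ((i : Fin a) × Fin (u i)) ((j : Fin b) × Fin (v j)) ℂ :=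
  fun x y => M x.1 y.1

section Aux

variable {X : Type*} [Fintype X] [DecidableEq X] {c : ℕ}

/-- Fiber of `Sigma.fst` over `k` in `Σ k, Fin (s k)` is `Fin (s k)`. -/
def sigmaFstFiber (s : Fin c → ℕ) (k : Fin c) :
    {z : (k' : Fin c) × Fin (s k') // z.1 = k} ≃ Fin (s k) where
  toFun z := z.prop ▸ z.val.2
  invFun b := ⟨⟨k, b⟩, rfl⟩
  left_inv := by rintro ⟨⟨k', b⟩, rfl⟩; rfl
  right_inv b := rfl

lemma fiber_card (g : X → Fin c) {s : Fin c → ℕ}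
    (φ : X ≃ (k : Fin c) × Fin (s k)) (hφ : ∀ x, (φ x).1 = g x) (k : Fin c) :
    Fintype.card {x // g x = k} = s k := by
  have e : {x // g x = k} ≃ {z : (k' : Fin c) × Fin (s k') // z.1 = k} :=
    { toFun := fun x => ⟨φ x.1, by rw [hφ]; exact x.2⟩
      invFun := fun z => ⟨φ.symm z.1, by
        have := hφ (φ.symm z.1); rw [Equiv.apply_symm_apply] at this
        rw [← this]; exact z.2⟩
      left_inv := fun x => by simp
      right_inv := fun z => by simp }
  rw [Fintype.card_congr (e.trans (sigmaFstFiber s k)), Fintype.card_fin]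

lemma exists_equiv (g : X → Fin c) {s : Fin c → ℕ}
    (hs : ∀ k, Fintype.card {x // g x = k} = s k) :
    ∃ φ : X ≃ (k : Fin c) × Fin (s k), ∀ x, (φ x).1 = g x := by
  have e : ∀ k, {x // g x = k} ≃ Fin (s k) := fun k => Fintype.equivFinOfCardEq (hs k)
  refine ⟨(Equiv.sigmaFiberEquiv g).symm.trans (Equiv.sigmaCongrRight e), fun x => rfl⟩

lemma card_fiber_equivs (g : X → Fin c) (s : Fin c → ℕ) :
    Fintype.card {φ : X ≃ (k : Fin c) × Fin (s k) // ∀ x, (φ x).1 = g x}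
      = if (fun k => Fintype.card {x // g x = k}) = s then ∏ k, (s k).factorial else 0 := by
  split_ifs with h
  · have hs : ∀ k, Fintype.card {x // g x = k} = s k := fun k => congrFun h k
    obtain ⟨φ₀, hφ₀⟩ := exists_equiv g hs
    have E : {φ : X ≃ (k : Fin c) × Fin (s k) // ∀ x, (φ x).1 = g x}
        ≃ {σ : Equiv.Perm ((k : Fin c) × Fin (s k)) // Sigma.fst ∘ σ = Sigma.fst} :=
      { toFun := fun φ => ⟨φ₀.symm.trans φ.1, funext fun z => by
          simp only [Function.comp_apply, Equiv.trans_apply]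
          rw [φ.2 (φ₀.symm z)]
          conv_rhs => rw [← Equiv.apply_symm_apply φ₀ z]
          rw [hφ₀]⟩
        invFun := fun σ => ⟨φ₀.trans σ.1, fun x => by
          have := congrFun σ.2 (φ₀ x)
          simp only [Function.comp_apply] at this
          simp only [Equiv.trans_apply, this, hφ₀]⟩
        left_inv := fun φ => Subtype.ext (by ext x : 1; simp)
        right_inv := fun σ => Subtype.ext (by ext z : 1; simp) }
    rw [Fintype.card_congr E, DomMulAct.stabilizer_card]
    exact Finset.prod_congr rfl fun k _ => by
      rw [Fintype.card_congr (sigmaFstFiber s k), Fintype.card_fin]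
  · rw [Fintype.card_eq_zero_iff]
    exact ⟨fun φ => h (funext fun k => fiber_card g φ.1 φ.2 k)⟩

end Aux

/-- Permanent composition formula: for an `a × c` matrix `M`, a `c × b` matrix `N`,
and multiplicity vectors `u ∈ Φ_{a,w}`, `v ∈ Φ_{b,w}`,
`Per[(MN)_{u,v}] = ∑_{s ∈ Φ_{c,w}} (1/s!) Per(M_{u,s}) Per(N_{s,v})`. -/
theorem permanent_composition (a b c w : ℕ)
    (M : Matrix (Fin a) (Fin c) ℂ) (N : Matrix (Fin c) (Fin b) ℂ)
    (u : Fin a → ℕ) (v : Fin b → ℕ)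
    (hu : ∑ i, u i = w) (hv : ∑ j, v j = w) :
    Per (rep (M * N) u v) =
      ∑ s ∈ Finset.Nat.antidiagonalTuple c w,
        (1 / ∏ i, ((s i).factorial : ℂ)) * (Per (rep M u s) * Per (rep N s v)) := by
  classical
  set X := (i : Fin a) × Fin (u i) with hXdef
  set Y := (j : Fin b) × Fin (v j) with hYdef
  set T : (X → Fin c) → (X ≃ Y) → ℂ :=
    fun g f => ∏ x, M x.1 (g x) * N (g x) (f x).1 with hT
  set S : (X → Fin c) → ℂ := fun g => ∑ f : X ≃ Y, T g f with hS
  set cnt : (X → Fin c) → (Fin c → ℕ) := fun g k => Fintype.card {x // g x = k} with hcnt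
  -- Step 1: LHS
  have hL : Per (rep (M * N) u v) = ∑ g : X → Fin c, S g := by
    rw [Per]
    have h1 : ∀ f : X ≃ Y, ∏ x : X, rep (M * N) u v x (f x) = ∑ g : X → Fin c, T g f := by
      intro f
      simp only [rep, Matrix.mul_apply, hT]
      exact Fintype.prod_sum (fun x k => M x.1 k * N k (f x).1)
    refine (Finset.sum_congr rfl fun f _ => h1 f).trans ?_
    rw [Finset.sum_comm]
  -- Step 2: key identity for each s
  have key : ∀ s : Fin c → ℕ,
      Per (rep M u s) * Per (rep N s v)
        = ∑ g : X → Fin c,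
            (((if cnt g = s then ∏ k, (s k).factorial else 0 : ℕ) : ℂ)) * S g := by
    intro s
    rw [Per, Per, Fintype.sum_mul_sum]
    have step1 : ∀ (φ : X ≃ (k : Fin c) × Fin (s k)),
        ∑ ψ : ((k : Fin c) × Fin (s k)) ≃ Y,
          (∏ x : X, rep M u s x (φ x)) * ∏ z, rep N s v z (ψ z)
        = S (fun x => (φ x).1) := by
      intro φ
      rw [hS]
      refine (Fintype.sum_equiv (Equiv.equivCongr φ (Equiv.refl Y)) _ _ ?_).symm
      intro f
      rw [← Equiv.prod_comp φ
        (fun z => rep N s v z (((Equiv.equivCongr φ (Equiv.refl Y)) f) z)),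
        ← Finset.prod_mul_distrib]
      simp [hT, rep, Equiv.equivCongr]
    refine (Finset.sum_congr rfl fun φ _ => step1 φ).trans ?_
    rw [← Fintype.sum_fiberwise (fun φ : X ≃ (k : Fin c) × Fin (s k) => fun x => (φ x).1)
      (fun φ => S (fun x => (φ x).1))]
    refine Finset.sum_congr rfl fun g _ => ?_
    rw [← card_fiber_equivs g s]
    have h2 : ∀ φ : {φ : X ≃ (k : Fin c) × Fin (s k) // (fun x => (φ x).1) = g},
        S (fun x => (φ.1 x).1) = S g := fun φ => by rw [show (fun x => (φ.1 x).1) = g from φ.2]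
    have hcongr : Fintype.card {φ : X ≃ (k : Fin c) × Fin (s k) // ∀ x, (φ x).1 = g x}
        = Fintype.card {φ : X ≃ (k : Fin c) × Fin (s k) // (fun x => (φ x).1) = g} :=
      Fintype.card_congr (Equiv.subtypeEquivRight (fun φ => (funext_iff).symm))
    rw [hcongr]
    simp only [h2]
    rw [Finset.sum_const, Finset.card_univ, nsmul_eq_mul]
  -- Step 3: term simplification
  have term : ∀ (s : Fin c → ℕ) (g : X → Fin c),
      (1 / ∏ i, ((s i).factorial : ℂ)) *
        ((((if cnt g = s then ∏ k, (s k).factorial else 0 : ℕ) : ℂ)) * S g)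
      = if cnt g = s then S g else 0 := by
    intro s g
    split_ifs with h
    · rw [Nat.cast_prod, one_div, inv_mul_cancel_left₀]
      exact Finset.prod_ne_zero_iff.2 fun k _ => Nat.cast_ne_zero.2 (Nat.factorial_ne_zero _)
    · simp
  -- Step 4: assemble
  rw [hL]
  have maps : ∀ g : X → Fin c, g ∈ (Finset.univ : Finset (X → Fin c)) →
      cnt g ∈ Finset.Nat.antidiagonalTuple c w := by
    intro g _
    rw [Finset.Nat.mem_antidiagonalTuple]
    have h3 : ∑ k, cnt g k = Fintype.card X := by
      rw [← Fintype.card_sigma]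
      exact Fintype.card_congr (Equiv.sigmaFiberEquiv g)
    rw [h3]
    show Fintype.card ((i : Fin a) × Fin (u i)) = w
    rw [Fintype.card_sigma]
    simpa using hu
  calc ∑ g : X → Fin c, S g
      = ∑ s ∈ Finset.Nat.antidiagonalTuple c w,
          ∑ g ∈ Finset.univ.filter (fun g => cnt g = s), S g :=
        (Finset.sum_fiberwise_of_maps_to maps _).symm
    _ = ∑ s ∈ Finset.Nat.antidiagonalTuple c w,
          ∑ g : X → Fin c, if cnt g = s then S g else 0 := by
        refine Finset.sum_congr rfl fun s _ => ?_
        rw [Finset.sum_filter]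
    _ = _ := by
        refine Finset.sum_congr rfl fun s _ => ?_
        rw [key s, Finset.mul_sum]
        exact Finset.sum_congr rfl fun g _ => (term s g).symm
end

section
/- Generalized Laplace expansion for the permanent: Let n ≥ 1, let W be an n×n complex matrix, and let j ∈ {0,1}^n be a fixed 0/1 vector. Then Per(W) = Σ_{i ∈ {0,1}^n, |i| = |j|} Per(W_{i,j}) · Per(W_{1^n − i, 1^n − j}), where W_{i,j} is the |j|×|j| matrix obtained from W by keeping exactly the k-th rows with i_k = 1 and the l-th columns with j_l = 1, and W_{1^n − i, 1^n − j} is the (n−|j|)×(n−|j|) matrix obtained from W by keeping exactly the k-th rows with i_k = 0 and the l-th columns with j_l = 0. -/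
lemma Per_reindex {α β α' β' : Type*} [Fintype α] [Fintype β] [Fintype α'] [Fintype β']
    [DecidableEq α] [DecidableEq β] [DecidableEq α'] [DecidableEq β']
    (eα : α' ≃ α) (eβ : β' ≃ β) (A : Matrix α β ℂ) :
    Per (A.submatrix eα eβ) = Per A := by
  unfold Per
  refine Fintype.sum_equiv (eα.equivCongr eβ) _ _ fun f => Fintype.prod_equiv eα
    (fun a => (A.submatrix eα eβ) a (f a)) _ fun a => ?_
  simp [Matrix.submatrix, Equiv.equivCongr]

def oneEquiv {n : ℕ} (u : Fin n → ℕ) (hu : ∀ l, u l ≤ 1) :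
    ((l : Fin n) × Fin (u l)) ≃ {l : Fin n // u l = 1} where
  toFun x := ⟨x.1, by have := x.2.isLt; have := hu x.1; omega⟩
  invFun y := ⟨y.1, ⟨0, by rw [y.2]; exact Nat.zero_lt_one⟩⟩
  left_inv x := by
    obtain ⟨l, v⟩ := x
    have h1 := v.isLt
    have h2 := hu l
    exact Sigma.ext rfl (heq_of_eq (Fin.ext (show 0 = (v:ℕ) by omega)))
  right_inv y := rfl

lemma Per_rep {n : ℕ} (W : Matrix (Fin n) (Fin n) ℂ) (u v : Fin n → ℕ)
    (hu : ∀ l, u l ≤ 1) (hv : ∀ l, v l ≤ 1) :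
    Per (rep W u v) = Per (W.submatrix (Subtype.val : {l // u l = 1} → Fin n)
      (Subtype.val : {l // v l = 1} → Fin n)) := by
  have h : rep W u v = (W.submatrix (Subtype.val : {l // u l = 1} → Fin n)
      (Subtype.val : {l // v l = 1} → Fin n)).submatrix (oneEquiv u hu) (oneEquiv v hv) := rfl
  rw [h, Per_reindex]

lemma subtypeCongr_apply' {α : Type*} {p q : α → Prop} [DecidablePred p] [DecidablePred q]
    (e : {x // p x} ≃ {x // q x}) (f : {x // ¬p x} ≃ {x // ¬q x}) (a : α) :
    e.subtypeCongr f a = if h : p a then (e ⟨a, h⟩ : α) else (f ⟨a, h⟩ : α) := by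
  by_cases h : p a <;> simp [Equiv.subtypeCongr, h]

/-- Generalized Laplace expansion for the permanent: for `n ≥ 1`, an `n × n` matrix `W`,
and a fixed 0/1 vector `j ∈ {0,1}^n`,
`Per W = ∑_{i ∈ {0,1}^n, |i| = |j|} Per(W_{i,j}) Per(W_{1^n - i, 1^n - j})`. -/
theorem laplace_expansion_permanent (n : ℕ) (hn : 1 ≤ n)
    (W : Matrix (Fin n) (Fin n) ℂ) (j : Fin n → ℕ) (hj : ∀ l, j l ≤ 1) :
    Per W =
      ∑ i ∈ (Finset.Nat.antidiagonalTuple n (∑ l, j l)).filter (fun i => ∀ l, i l ≤ 1),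
        Per (rep W i j) * Per (rep W (fun l => 1 - i l) (fun l => 1 - j l)) := by
  have hmap : ∀ σ : Fin n ≃ Fin n, σ ∈ (Finset.univ : Finset (Fin n ≃ Fin n)) →
      (fun l => j (σ l)) ∈ (Finset.Nat.antidiagonalTuple n (∑ l, j l)).filter
        (fun i => ∀ l, i l ≤ 1) := by
    intro σ _
    simp only [Finset.mem_filter, Finset.Nat.mem_antidiagonalTuple]
    exact ⟨Equiv.sum_comp σ j, fun l => hj _⟩
  rw [Per, ← Finset.sum_fiberwise_of_maps_to hmap (fun σ => ∏ l, W l (σ l))]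
  refine Finset.sum_congr rfl fun i hi => ?_
  obtain ⟨-, hi2⟩ := Finset.mem_filter.mp hi
  rw [Per_rep W i j hi2 hj, Per_rep W _ _ (fun l => Nat.sub_le _ _) (fun l => Nat.sub_le _ _),
    ← Per_reindex (Equiv.subtypeEquivRight
        (fun l : Fin n => show (¬ i l = 1) ↔ (1 - i l = 1) by have := hi2 l; omega))
      (Equiv.subtypeEquivRight
        (fun l : Fin n => show (¬ j l = 1) ↔ (1 - j l = 1) by have := hj l; omega))
      (W.submatrix (Subtype.val : {l : Fin n // 1 - i l = 1} → Fin n)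
        (Subtype.val : {l : Fin n // 1 - j l = 1} → Fin n))]
  have hsub : ((W.submatrix (Subtype.val : {l : Fin n // 1 - i l = 1} → Fin n)
        (Subtype.val : {l : Fin n // 1 - j l = 1} → Fin n)).submatrix
        (Equiv.subtypeEquivRight
          (fun l : Fin n => show (¬ i l = 1) ↔ (1 - i l = 1) by have := hi2 l; omega))
        (Equiv.subtypeEquivRight
          (fun l : Fin n => show (¬ j l = 1) ↔ (1 - j l = 1) by have := hj l; omega)))
      = W.submatrix (Subtype.val : {l : Fin n // ¬ i l = 1} → Fin n)
        (Subtype.val : {l : Fin n // ¬ j l = 1} → Fin n) := rfl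
  rw [hsub, Per, Per, Finset.sum_mul_sum, ← Finset.sum_product', Finset.univ_product_univ]
  refine Finset.sum_bij'
    (i := fun (σ : Fin n ≃ Fin n) hσ =>
      (Equiv.subtypeEquiv σ (fun l => show i l = 1 ↔ j (σ l) = 1 by
          have h := congrFun (Finset.mem_filter.mp hσ).2 l; omega),
       Equiv.subtypeEquiv σ (fun l => show (¬ i l = 1) ↔ (¬ j (σ l) = 1) by
          have h := congrFun (Finset.mem_filter.mp hσ).2 l; omega)))
    (j := fun p _ => Equiv.subtypeCongr p.1 p.2)
    ?_ ?_ ?_ ?_ ?_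
  · intro σ hσ; exact Finset.mem_univ _
  · intro p _
    simp only [Finset.mem_filter, Finset.mem_univ, true_and]
    funext l
    by_cases hl : i l = 1
    · rw [subtypeCongr_apply', dif_pos hl, (p.1 ⟨l, hl⟩).2, hl]
    · rw [subtypeCongr_apply', dif_neg hl]
      have h1 := (p.2 ⟨l, hl⟩).2
      have h2 := hj ((p.2 ⟨l, hl⟩) : Fin n)
      have h3 := hi2 l
      omega
  · intro σ hσ
    ext l
    rw [subtypeCongr_apply']
    by_cases hl : i l = 1
    · rw [dif_pos hl]; rfl
    · rw [dif_neg hl]; rfl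
  · intro p _
    refine Prod.ext ?_ ?_
    · ext x
      exact congrArg Fin.val (show Equiv.subtypeCongr p.1 p.2 ↑x = ↑(p.1 x) by
        rw [subtypeCongr_apply', dif_pos x.2])
    · ext x
      exact congrArg Fin.val (show Equiv.subtypeCongr p.1 p.2 ↑x = ↑(p.2 x) by
        rw [subtypeCongr_apply', dif_neg x.2])
  · intro σ hσ
    rw [← Fintype.prod_subtype_mul_prod_subtype (fun l => i l = 1) (fun l => W l (σ l))]
    rfl
end

section
/- Permanent of a product as a multiplicity-weighted sum: Let a, c be natural numbers, let M be an a×c complex matrix and N a c×a complex matrix. Then Per(MN) = Σ_{s ∈ Φ_{c,a}} (1/s!) · Per(M_{1^a, s}) · Per(N_{s, 1^a}), where 1^a denotes the all-ones vector of length a. -/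
open Finset

lemma Per_submatrix' {α β α' β' : Type*} [Fintype α] [Fintype β] [Fintype α'] [Fintype β']
    [DecidableEq α] [DecidableEq β] [DecidableEq α'] [DecidableEq β']
    (A : Matrix α β ℂ) (e₁ : α' ≃ α) (e₂ : β' ≃ β) :
    Per (A.submatrix e₁ e₂) = Per A := by
  unfold Per
  refine Fintype.sum_equiv (e₁.equivCongr e₂) _ _ (fun f => ?_)
  rw [← Equiv.prod_comp e₁ (fun j => A j (Equiv.equivCongr e₁ e₂ f j))]
  simp [Equiv.equivCongr, Matrix.submatrix_apply]

def sigmaFinOne (a : ℕ) : ((i : Fin a) × Fin 1) ≃ Fin a where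
  toFun x := x.1
  invFun i := ⟨i, 0⟩
  left_inv x := Sigma.ext rfl (heq_of_eq (Subsingleton.elim _ _))
  right_inv i := rfl

section counting

variable {a c : ℕ} (s : Fin c → ℕ) (f : Fin a → Fin c)

def Gmap (p : ∀ k, {i : Fin a // f i = k} ≃ Fin (s k)) : Fin a ≃ Σ k, Fin (s k) where
  toFun i := ⟨f i, p (f i) ⟨i, rfl⟩⟩
  invFun x := ((p x.1).symm x.2).1
  left_inv i := by simp
  right_inv := by
    rintro ⟨k, y⟩
    have key : ∀ (k : Fin c) (z : {i : Fin a // f i = k}),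
        (⟨f z.1, p (f z.1) ⟨z.1, rfl⟩⟩ : Σ k, Fin (s k)) = ⟨k, p k z⟩ := by
      rintro k ⟨i, rfl⟩; rfl
    simpa using key k ((p k).symm y)

lemma Gmap_inj : Function.Injective (Gmap s f) := by
  intro p q h
  have h' : ∀ i, p (f i) ⟨i, rfl⟩ = q (f i) ⟨i, rfl⟩ := by
    intro i
    have := congrArg (fun e : Fin a ≃ Σ k, Fin (s k) => e i) h
    exact eq_of_heq (Sigma.mk.inj_iff.mp this).2
  funext k
  apply Equiv.ext
  rintro ⟨i, rfl⟩
  exact h' i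

lemma Gmap_surj (g : Fin a ≃ Σ k, Fin (s k)) (hg : ∀ i, (g i).1 = f i) :
    ∃ p, Gmap s f p = g := by
  have hbij : ∀ k : Fin c, Function.Bijective
      (fun z : {i : Fin a // f i = k} =>
        Fin.cast (congrArg s ((hg z.1).trans z.2)) (g z.1).2) := by
    intro k
    constructor
    · intro z z' h
      have hval : ((g z.1).2 : ℕ) = ((g z'.1).2 : ℕ) := by
        simpa using congrArg Fin.val h
      have hfst : (g z.1).1 = (g z'.1).1 := by rw [hg z.1, hg z'.1, z.2, z'.2]
      have : g z.1 = g z'.1 :=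
        Sigma.ext hfst ((Fin.heq_ext_iff (congrArg s hfst)).mpr hval)
      exact Subtype.ext (g.injective this)
    · intro y
      refine ⟨⟨g.symm ⟨k, y⟩, ?_⟩, ?_⟩
      · have := hg (g.symm ⟨k, y⟩)
        rw [Equiv.apply_symm_apply] at this
        exact this.symm
      · apply Fin.ext
        have hgg : g (g.symm ⟨k, y⟩) = ⟨k, y⟩ := Equiv.apply_symm_apply _ _
        simpa using congrArg (fun x : Σ k, Fin (s k) => (x.2 : ℕ)) hgg
  refine ⟨fun k => Equiv.ofBijective _ (hbij k), ?_⟩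
  apply Equiv.ext
  intro i
  show (⟨f i, _⟩ : Σ k, Fin (s k)) = g i
  refine Sigma.ext (hg i).symm ?_
  refine (Fin.heq_ext_iff (congrArg s (hg i).symm)).mpr ?_
  simp [Equiv.ofBijective]

lemma card_fiber :
    Fintype.card {g : Fin a ≃ Σ k, Fin (s k) // ∀ i, (g i).1 = f i}
      = ∏ k, Fintype.card ({i : Fin a // f i = k} ≃ Fin (s k)) := by
  rw [← Fintype.card_pi]
  refine (Fintype.card_of_bijective
    (f := fun p => (⟨Gmap s f p, fun i => rfl⟩ :
      {g : Fin a ≃ Σ k, Fin (s k) // ∀ i, (g i).1 = f i})) ⟨?_, ?_⟩).symm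
  · intro p q h
    exact Gmap_inj s f (congrArg Subtype.val h)
  · rintro ⟨g, hg⟩
    obtain ⟨p, hp⟩ := Gmap_surj s f g hg
    exact ⟨p, Subtype.ext hp⟩

lemma card_equiv_fin (α : Type*) [Fintype α] [DecidableEq α] (n : ℕ) :
    Fintype.card (α ≃ Fin n) = if Fintype.card α = n then n.factorial else 0 := by
  by_cases h : Fintype.card α = n
  · rw [if_pos h, Fintype.card_equiv (Fintype.equivFinOfCardEq h), h]
  · rw [if_neg h, Fintype.card_eq_zero_iff]
    exact ⟨fun e => h (by simpa using Fintype.card_congr e)⟩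

lemma cardC_eq :
    (univ.filter fun g : Fin a ≃ Σ k, Fin (s k) => (fun i => (g i).1) = f).card
      = if (∀ k, Fintype.card {i : Fin a // f i = k} = s k)
          then ∏ k, (s k).factorial else 0 := by
  have h1 : (univ.filter fun g : Fin a ≃ Σ k, Fin (s k) => (fun i => (g i).1) = f)
      = (univ.filter fun g : Fin a ≃ Σ k, Fin (s k) => ∀ i, (g i).1 = f i) := by
    apply filter_congr; intro g _; simp [funext_iff]
  rw [h1, ← Fintype.card_subtype, card_fiber]
  rw [Finset.prod_congr rfl (fun k _ => card_equiv_fin {i : Fin a // f i = k} (s k))]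
  by_cases h : ∀ k, Fintype.card {i : Fin a // f i = k} = s k
  · rw [if_pos h]; exact Finset.prod_congr rfl (fun k _ => by rw [if_pos (h k)])
  · rw [if_neg h]
    push_neg at h
    obtain ⟨k0, hk0⟩ := h
    exact Finset.prod_eq_zero (mem_univ k0) (by rw [if_neg hk0])

end counting

/-- Permanent of a product as a multiplicity-weighted sum: for an `a × c` matrix `M` and a
`c × a` matrix `N`, `Per(MN) = ∑_{s ∈ Φ_{c,a}} (1/s!) Per(M_{1^a, s}) Per(N_{s, 1^a})`. -/
theorem permanent_product (a c : ℕ)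
    (M : Matrix (Fin a) (Fin c) ℂ) (N : Matrix (Fin c) (Fin a) ℂ) :
    Per (M * N) =
      ∑ s ∈ Finset.Nat.antidiagonalTuple c a,
        (1 / ∏ i, ((s i).factorial : ℂ)) *
          (Per (rep M (fun _ => 1) s) * Per (rep N s (fun _ => 1))) := by
  classical
  set T : (Fin a → Fin c) → ℂ :=
    fun f => ∑ σ : Fin a ≃ Fin a, ∏ i, M i (f i) * N (f i) (σ i) with hT
  -- Step A
  have stepA : Per (M * N) = ∑ f : Fin a → Fin c, T f := by
    unfold Per
    simp only [Matrix.mul_apply]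
    rw [Finset.sum_congr rfl (fun σ _ => Finset.prod_univ_sum (fun _ => univ)
      (fun i k => M i k * N k (σ i)))]
    rw [Finset.sum_comm]
    simp [hT, Fintype.piFinset_univ]
  -- Step B
  have stepB : ∀ s : Fin c → ℕ,
      Per (rep M (fun _ => 1) s) * Per (rep N s (fun _ => 1))
        = ∑ g : Fin a ≃ Σ k, Fin (s k), T (fun i => (g i).1) := by
    intro s
    have hM : Per (rep M (fun _ => 1) s)
        = ∑ g : Fin a ≃ Σ k, Fin (s k), ∏ i, M i (g i).1 := by
      have : rep M (fun _ => 1) s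
          = (Matrix.of fun (i : Fin a) (x : Σ k, Fin (s k)) => M i x.1).submatrix
              (sigmaFinOne a) (Equiv.refl _) := rfl
      rw [this, Per_submatrix']
      rfl
    have hN : Per (rep N s (fun _ => 1))
        = ∑ h : (Σ k, Fin (s k)) ≃ Fin a, ∏ x, N x.1 (h x) := by
      have : rep N s (fun _ => 1)
          = (Matrix.of fun (x : Σ k, Fin (s k)) (j : Fin a) => N x.1 j).submatrix
              (Equiv.refl _) (sigmaFinOne a) := rfl
      rw [this, Per_submatrix']
      rfl
    rw [hM, hN, Finset.sum_mul_sum]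
    refine Finset.sum_congr rfl (fun g _ => ?_)
    have hinner : ∑ h : (Σ k, Fin (s k)) ≃ Fin a, ∏ x, N x.1 (h x)
        = ∑ σ : Fin a ≃ Fin a, ∏ i, N (g i).1 (σ i) := by
      refine (Fintype.sum_equiv (Equiv.equivCongr g (Equiv.refl (Fin a))) _ _
        (fun σ => ?_)).symm
      rw [← Equiv.prod_comp g
        (fun x => N x.1 ((Equiv.equivCongr g (Equiv.refl (Fin a)) σ) x))]
      simp [Equiv.equivCongr]
    rw [← Finset.mul_sum, hinner, Finset.mul_sum, hT]
    exact Finset.sum_congr rfl (fun σ _ => (Finset.prod_mul_distrib).symm)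
  -- Step C
  have stepC : ∀ s : Fin c → ℕ,
      (∑ g : Fin a ≃ Σ k, Fin (s k), T (fun i => (g i).1))
        = ∑ f : Fin a → Fin c,
            (((univ.filter fun g : Fin a ≃ Σ k, Fin (s k) =>
                (fun i => (g i).1) = f).card : ℂ)) * T f := by
    intro s
    rw [← Finset.sum_fiberwise univ (fun g : Fin a ≃ Σ k, Fin (s k) => fun i => (g i).1)
      (fun g => T (fun i => (g i).1))]
    refine Finset.sum_congr rfl (fun f _ => ?_)
    rw [Finset.sum_congr rfl (fun g hg => by
      rw [(Finset.mem_filter.mp hg).2]), Finset.sum_const, nsmul_eq_mul]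
  -- coefficient is 1
  have coef : ∀ f : Fin a → Fin c,
      (∑ s ∈ Finset.Nat.antidiagonalTuple c a,
        (1 / ∏ i, ((s i).factorial : ℂ)) *
          ((univ.filter fun g : Fin a ≃ Σ k, Fin (s k) =>
              (fun i => (g i).1) = f).card : ℂ)) = 1 := by
    intro f
    set cnt : Fin c → ℕ := fun k => Fintype.card {i : Fin a // f i = k} with hcnt
    have hmem : cnt ∈ Finset.Nat.antidiagonalTuple c a := by
      rw [Finset.Nat.mem_antidiagonalTuple]
      have := Fintype.card_congr (Equiv.sigmaFiberEquiv f)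
      simpa [Fintype.card_sigma] using this
    have hterm : ∀ s ∈ Finset.Nat.antidiagonalTuple c a,
        (1 / ∏ i, ((s i).factorial : ℂ)) *
          ((univ.filter fun g : Fin a ≃ Σ k, Fin (s k) =>
              (fun i => (g i).1) = f).card : ℂ)
          = if s = cnt then 1 else 0 := by
      intro s _
      rw [cardC_eq]
      by_cases hs : s = cnt
      · subst hs
        rw [if_pos (fun k => rfl), if_pos rfl]
        push_cast
        rw [one_div_mul_cancel]
        refine Finset.prod_ne_zero_iff.mpr (fun k _ => ?_)
        exact_mod_cast (Nat.factorial_ne_zero _)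
      · rw [if_neg, if_neg hs, Nat.cast_zero, mul_zero]
        intro h
        exact hs (funext fun k => (h k).symm)
    rw [Finset.sum_congr rfl hterm, Finset.sum_ite_eq' _ cnt (fun _ => (1:ℂ)), if_pos hmem]
  -- assemble
  rw [stepA]
  have h1 : ∀ s ∈ Finset.Nat.antidiagonalTuple c a,
      (1 / ∏ i, ((s i).factorial : ℂ)) *
          (Per (rep M (fun _ => 1) s) * Per (rep N s (fun _ => 1)))
        = ∑ f : Fin a → Fin c,
            (1 / ∏ i, ((s i).factorial : ℂ)) *
              (((univ.filter fun g : Fin a ≃ Σ k, Fin (s k) =>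
                  (fun i => (g i).1) = f).card : ℂ) * T f) := by
    intro s _
    rw [stepB s, stepC s, Finset.mul_sum]
  rw [Finset.sum_congr rfl h1]
  rw [Finset.sum_comm (s := Finset.Nat.antidiagonalTuple c a) (t := univ)]
  refine Finset.sum_congr rfl (fun f _ => ?_)
  calc T f = 1 * T f := (one_mul _).symm
    _ = (∑ s ∈ Finset.Nat.antidiagonalTuple c a,
          (1 / ∏ i, ((s i).factorial : ℂ)) *
            ((univ.filter fun g : Fin a ≃ Σ k, Fin (s k) =>
                (fun i => (g i).1) = f).card : ℂ)) * T f := by rw [coef f]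
    _ = ∑ s ∈ Finset.Nat.antidiagonalTuple c a,
          (1 / ∏ i, ((s i).factorial : ℂ)) *
            (((univ.filter fun g : Fin a ≃ Σ k, Fin (s k) =>
                (fun i => (g i).1) = f).card : ℂ) * T f) := by
        rw [Finset.sum_mul]
        exact Finset.sum_congr rfl (fun s _ => mul_assoc _ _ _)
end
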